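/- With (V,d) as above and d_1 = x_1 ∂/∂x_4 + ∑_{i=1}^{∞} x_{6i−2} ∂/∂x_{6i}, there exist 1-cochains d_k = −x_{6k−9} ∂/∂x_{6k−6} + x_{6k−5} ∂/∂x_{6k−2} for all k ≥ 2 such that d_t = d + ∑_{i≥1} tⁱ d_i is a differential on V[[t]] with d_i ≠ 0 for every i ≥ 1, and this deformation is non-trivial. -/

import Mathlib

open Finset

/-- The k[[t]]-linear extension to V[[t]] ≅ (ℕ → V) of a formal power series
`∑ tⁱ D i` of k-linear endomorphisms of `V` (Cauchy-product action on coefficients). -/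
noncomputable def ext {k V : Type*} [Field k] [AddCommGroup V] [Module k V]
    (D : ℕ → Module.End k V) : Module.End k (ℕ → V) where
  toFun v n := ∑ i ∈ Finset.range (n + 1), D i (v (n - i))
  map_add' u v := by
    funext n
    simp [Finset.sum_add_distrib]
  map_smul' c v := by
    funext n
    simp [Finset.smul_sum]

/-- The trivial deformation `d_t = d` of a differential `d`. -/
noncomputable def trivDef {k V : Type*} [Field k] [AddCommGroup V] [Module k V]
    (d : Module.End k V) : ℕ → Module.End k V :=
  fun n => if n = 0 then d else 0

/-- Equivalence of deformations: a k[[t]]-linear automorphism `φ_t` of `V[[t]]` with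
`φ_t ≡ Id (mod t)` and `d_t φ_t = φ_t d_t'`. -/
def IsEquivDef {k V : Type*} [Field k] [AddCommGroup V] [Module k V]
    (D D' : ℕ → Module.End k V) : Prop :=
  ∃ Φ : ℕ → Module.End k V, Φ 0 = 1 ∧ Function.Bijective (ext Φ) ∧
    ext D * ext Φ = ext Φ * ext D'

/-- The basis vector `x_i` of the graded module `V = ⊕_{p≥1} ⟨x_{2p-1}, x_{2p}⟩`,
modelled inside `ℕ →₀ k` (only indices `i ≥ 1` are used). -/
noncomputable def xv (k : Type*) [Field k] (i : ℕ) : ℕ →₀ k := Finsupp.single i 1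

/-- The elementary operator `x_i ∂/∂x_j`, sending `x_j ↦ x_i` and all other
basis vectors to `0`. -/
noncomputable def Elem (k : Type*) [Field k] (i j : ℕ) : Module.End k (ℕ →₀ k) :=
  (Finsupp.lsingle i).comp (Finsupp.lapply j)

/-- The degree-`p` homogeneous piece `V_p = ⟨x_{2p-1}, x_{2p}⟩` (and `V_p = 0` for `p ≤ 0`). -/
noncomputable def piece (k : Type*) [Field k] (p : ℕ) : Submodule k (ℕ →₀ k) :=
  if p = 0 then ⊥ else Submodule.span k {xv k (2 * p - 1), xv k (2 * p)}

section Aux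
variable {k : Type*} [Field k]

lemma xv_ne_zero (i : ℕ) : xv k i ≠ 0 := by
  simp [xv, Finsupp.single_eq_zero]


lemma Elem_xv (i j l : ℕ) : Elem k i j (xv k l) = if l = j then xv k i else 0 := by
  simp only [Elem, xv, LinearMap.comp_apply, Finsupp.lapply_apply, Finsupp.lsingle_apply,
    Finsupp.single_apply]
  split_ifs <;> simp

noncomputable def Dfam (d d1 : Module.End k (ℕ →₀ k)) : ℕ → Module.End k (ℕ →₀ k) :=
  fun m => if m = 0 then d else if m = 1 then d1
    else -(Elem k (6 * m - 9) (6 * m - 6)) + Elem k (6 * m - 5) (6 * m - 2)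

variable (d d1 : Module.End k (ℕ →₀ k))

lemma Dfam_zero : Dfam d d1 0 = d := rfl
lemma Dfam_one : Dfam d d1 1 = d1 := rfl

lemma Dm_xv {m : ℕ} (hm : 2 ≤ m) (j : ℕ) : Dfam d d1 m (xv k j) =
    if j = 6 * m - 6 then -(xv k (6 * m - 9))
    else if j = 6 * m - 2 then xv k (6 * m - 5) else 0 := by
  rw [Dfam, if_neg (by omega), if_neg (by omega)]
  simp only [LinearMap.add_apply, LinearMap.neg_apply, Elem_xv]
  split_ifs <;> first | omega | simp

lemma end_ext' {f : Module.End k (ℕ →₀ k)} (h : ∀ j, f (xv k j) = 0) : f = 0 := by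
  apply Finsupp.lhom_ext
  intro a b
  have hs : (Finsupp.single a b : ℕ →₀ k) = b • xv k a := by
    simp [xv, Finsupp.smul_single']
  rw [hs, map_smul, h, smul_zero]; simp

variable (hd : ∀ j : ℕ, d (xv k j) = if j % 6 = 3 then xv k (j - 2) else 0)
  (hd1 : ∀ j : ℕ, d1 (xv k j) =
      if j = 4 then xv k 1
      else if j % 6 = 0 ∧ 6 ≤ j then xv k (j - 2)
      else 0)

include hd in
lemma L_dd : d * d = 0 := by
  apply end_ext'; intro j
  rw [Module.End.mul_apply, hd j]
  split_ifs with h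
  · rw [hd, if_neg (by omega)]
  · simp

include hd hd1 in
lemma L_dd1 : d * d1 = 0 := by
  apply end_ext'; intro j
  rw [Module.End.mul_apply, hd1 j]
  split_ifs with h1 h2
  · rw [hd, if_neg (by omega)]
  · rw [hd, if_neg (by omega)]
  · simp

include hd hd1 in
lemma L_d1d : d1 * d = 0 := by
  apply end_ext'; intro j
  rw [Module.End.mul_apply, hd j]
  split_ifs with h
  · rw [hd1, if_neg (by omega), if_neg (by omega)]
  · simp

include hd1 in
lemma L_d1D {m : ℕ} (hm : 2 ≤ m) : d1 * Dfam d d1 m = 0 := by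
  apply end_ext'; intro j
  rw [Module.End.mul_apply, Dm_xv d d1 hm]
  split_ifs with h1 h2
  · rw [map_neg, hd1, if_neg (by omega), if_neg (by omega), neg_zero]
  · rw [hd1, if_neg (by omega), if_neg (by omega)]
  · simp

include hd in
lemma L_Dd {m : ℕ} (hm : 2 ≤ m) : Dfam d d1 m * d = 0 := by
  apply end_ext'; intro j
  rw [Module.End.mul_apply, hd j]
  split_ifs with h
  · rw [Dm_xv d d1 hm, if_neg (by omega), if_neg (by omega)]
  · simp

lemma L_DD {i j : ℕ} (hi : 2 ≤ i) (hj : 2 ≤ j) : Dfam d d1 i * Dfam d d1 j = 0 := by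
  apply end_ext'; intro l
  rw [Module.End.mul_apply, Dm_xv d d1 hj]
  split_ifs with h1 h2
  · rw [map_neg, Dm_xv d d1 hi, if_neg (by omega), if_neg (by omega), neg_zero]
  · rw [Dm_xv d d1 hi, if_neg (by omega), if_neg (by omega)]
  · simp

include hd hd1 in
lemma L_cancel {m : ℕ} (hm : 2 ≤ m) :
    d * Dfam d d1 m + Dfam d d1 (m - 1) * d1 = 0 := by
  apply end_ext'; intro j
  rw [LinearMap.add_apply, Module.End.mul_apply, Module.End.mul_apply, Dm_xv d d1 hm, hd1 j]
  rcases eq_or_lt_of_le hm with h2 | h3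
  · -- m = 2
    subst h2
    rw [show (2:ℕ) - 1 = 1 from rfl, Dfam_one]
    by_cases h1 : j = 6 * 2 - 6
    · rw [if_pos h1, if_neg (by omega), if_pos (by omega), map_neg, hd,
        if_pos (by norm_num), hd1, if_pos (by omega)]
      norm_num
    · rw [if_neg h1]
      by_cases h2 : j = 6 * 2 - 2
      · rw [if_pos h2, hd, if_neg (by omega), if_neg (by omega),
          if_neg (by omega), map_zero, add_zero]
      · rw [if_neg h2, map_zero, zero_add]
        by_cases h3 : j = 4
        · rw [if_pos h3, hd1, if_neg (by omega), if_neg (by omega)]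
        · rw [if_neg h3]
          by_cases h4 : j % 6 = 0 ∧ 6 ≤ j
          · rw [if_pos h4, hd1, if_neg (by omega), if_neg (by omega)]
          · rw [if_neg h4, map_zero]
  · -- m ≥ 3
    have hm1 : 2 ≤ m - 1 := by omega
    by_cases h1 : j = 6 * m - 6
    · rw [if_pos h1, if_neg (by omega), if_pos (by omega), map_neg, hd,
        if_pos (by omega), Dm_xv d d1 hm1, if_neg (by omega), if_pos (by omega),
        show 6 * m - 9 - 2 = 6 * (m - 1) - 5 by omega]
      simp
    · rw [if_neg h1]
      by_cases h2 : j = 6 * m - 2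
      · rw [if_pos h2, hd, if_neg (by omega), if_neg (by omega),
          if_neg (by omega), map_zero, add_zero]
      · rw [if_neg h2, map_zero, zero_add]
        by_cases h3 : j = 4
        · rw [if_pos h3, Dm_xv d d1 hm1, if_neg (by omega), if_neg (by omega)]
        · rw [if_neg h3]
          by_cases h4 : j % 6 = 0 ∧ 6 ≤ j
          · rw [if_pos h4, Dm_xv d d1 hm1, if_neg (by omega), if_neg (by omega)]
          · rw [if_neg h4, map_zero]


lemma ext_apply {V : Type*} [AddCommGroup V] [Module k V] (A : ℕ → Module.End k V)
    (v : ℕ → V) (n : ℕ) : ext A v n = ∑ i ∈ Finset.range (n + 1), A i (v (n - i)) := rfl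

lemma ext_mul {V : Type*} [AddCommGroup V] [Module k V] (A B : ℕ → Module.End k V) :
    ext A * ext B = ext (fun m => ∑ i ∈ Finset.range (m + 1), A i * B (m - i)) := by
  apply LinearMap.ext; intro v; funext n
  show (∑ i ∈ Finset.range (n + 1), A i (∑ j ∈ Finset.range (n - i + 1), B j (v (n - i - j))))
    = ∑ m ∈ Finset.range (n + 1), (∑ i ∈ Finset.range (m + 1), A i * B (m - i)) (v (n - m))
  simp only [LinearMap.sum_apply, Module.End.mul_apply, map_sum]
  rw [Finset.sum_sigma', Finset.sum_sigma']
  apply Finset.sum_nbij' (fun p => (⟨p.1 + p.2, p.1⟩ : Σ _ : ℕ, ℕ))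
    (fun p => (⟨p.2, p.1 - p.2⟩ : Σ _ : ℕ, ℕ))
  · rintro ⟨i, j⟩ hm
    simp only [Finset.mem_sigma, Finset.mem_range] at hm ⊢
    omega
  · rintro ⟨m, i⟩ hm
    simp only [Finset.mem_sigma, Finset.mem_range] at hm ⊢
    omega
  · rintro ⟨i, j⟩ hm; simp
  · rintro ⟨m, i⟩ hm
    simp only [Finset.mem_sigma, Finset.mem_range] at hm
    simp only [Sigma.mk.inj_iff]
    exact ⟨by omega, heq_of_eq rfl⟩
  · rintro ⟨i, j⟩ hm
    simp only [Finset.mem_sigma, Finset.mem_range] at hm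
    have h1 : i + j - i = j := by omega
    have h2 : n - i - j = n - (i + j) := by omega
    rw [h1, h2]

include hd hd1 in
lemma L_sum (m : ℕ) :
    ∑ i ∈ Finset.range (m + 1), Dfam d d1 i * Dfam d d1 (m - i) = 0 := by
  match m with
  | 0 => simpa [Dfam_zero] using L_dd d hd
  | 1 =>
    rw [Finset.sum_range_succ, Finset.sum_range_one]
    norm_num [Dfam_zero, Dfam_one]
    rw [L_dd1 d d1 hd hd1, L_d1d d d1 hd hd1, add_zero]
  | (n + 2) =>
    set M := n + 2 with hM
    have key : ∀ i ∈ Finset.range (M + 1), Dfam d d1 i * Dfam d d1 (M - i) =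
        (if i = 0 then d * Dfam d d1 M else 0) +
        (if i = M - 1 then Dfam d d1 (M - 1) * d1 else 0) := by
      intro i hi
      rw [Finset.mem_range] at hi
      by_cases h0 : i = 0
      · subst h0
        rw [if_pos rfl, if_neg (by omega), add_zero, Dfam_zero, Nat.sub_zero]
      · by_cases h1 : i = M - 1
        · subst h1
          rw [if_neg h0, if_pos rfl, zero_add, show M - (M - 1) = 1 by omega, Dfam_one]
        · rw [if_neg h0, if_neg h1, add_zero]
          by_cases h2 : i = 1
          · subst h2
            rw [Dfam_one]
            exact L_d1D d d1 hd1 (by omega)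
          · by_cases h3 : i = M
            · subst h3
              rw [Nat.sub_self, Dfam_zero]
              exact L_Dd d d1 hd (by omega)
            · exact L_DD d d1 (by omega) (by omega)
    rw [Finset.sum_congr rfl key, Finset.sum_add_distrib,
      Finset.sum_ite_eq' (Finset.range (M + 1)) 0, Finset.sum_ite_eq' (Finset.range (M + 1)) (M - 1),
      if_pos (by simp), if_pos (by rw [Finset.mem_range]; omega)]
    exact L_cancel d d1 hd hd1 (by omega)

lemma ext_zero_fam {V : Type*} [AddCommGroup V] [Module k V] :
    ext (fun _ : ℕ => (0 : Module.End k V)) = 0 := by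
  apply LinearMap.ext; intro v; funext n
  show (∑ i ∈ Finset.range (n + 1), (0 : Module.End k V) (v (n - i))) = 0
  simp

include hd in
lemma coord4 (y : ℕ →₀ k) : d y 4 = 0 := by
  have h : (Finsupp.lapply 4 : (ℕ →₀ k) →ₗ[k] k).comp d = 0 := by
    apply Finsupp.lhom_ext
    intro a b
    have hs : (Finsupp.single a b : ℕ →₀ k) = b • xv k a := by
      simp [xv, Finsupp.smul_single']
    rw [hs, map_smul, map_smul]
    simp only [LinearMap.comp_apply, Finsupp.lapply_apply, hd]
    split_ifs with hh
    · rw [xv, Finsupp.single_apply, if_neg (by omega)]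
      simp
    · simp
  have := LinearMap.congr_fun h y
  simpa using this

end Aux

/-- With `d : x_{6i-3} ↦ x_{6i-5}` and `d_1 = x_1 ∂/∂x_4 + ∑_{i=1}^{∞} x_{6i-2} ∂/∂x_{6i}`,
there are 1-cochains `d_m = -x_{6m-9} ∂/∂x_{6m-6} + x_{6m-5} ∂/∂x_{6m-2}` (for `m ≥ 2`)
such that `d_t = d + ∑_{i≥1} tⁱ d_i` is a differential on `V[[t]]` with `d_i ≠ 0` for every
`i ≥ 1`, and this deformation is non-trivial. -/
theorem example_deformation_all_orders {k : Type*} [Field k]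
    (d d1 : Module.End k (ℕ →₀ k))
    (hd : ∀ j : ℕ, d (xv k j) = if j % 6 = 3 then xv k (j - 2) else 0)
    (hd1 : ∀ j : ℕ, d1 (xv k j) =
      if j = 4 then xv k 1
      else if j % 6 = 0 ∧ 6 ≤ j then xv k (j - 2)
      else 0) :
    ∃ D : ℕ → Module.End k (ℕ →₀ k),
      D 0 = d ∧ D 1 = d1 ∧
      (∀ m : ℕ, 2 ≤ m → D m = -(Elem k (6 * m - 9) (6 * m - 6)) + Elem k (6 * m - 5) (6 * m - 2)) ∧
      ext D * ext D = 0 ∧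
      (∀ i : ℕ, 1 ≤ i → D i ≠ 0) ∧
      ¬ IsEquivDef D (trivDef d) := by
  refine ⟨Dfam d d1, Dfam_zero d d1, Dfam_one d d1, ?_, ?_, ?_, ?_⟩
  · intro m hm
    rw [Dfam, if_neg (by omega), if_neg (by omega)]
  · rw [ext_mul]
    have hz : (fun m => ∑ i ∈ Finset.range (m + 1), Dfam d d1 i * Dfam d d1 (m - i))
        = fun _ => (0 : Module.End k (ℕ →₀ k)) := funext (L_sum d d1 hd hd1)
    rw [hz, ext_zero_fam]
  · intro i hi
    rcases eq_or_lt_of_le hi with h1 | h2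
    · subst h1
      rw [Dfam_one]
      intro hcon
      have := hd1 4
      rw [hcon] at this
      simp only [LinearMap.zero_apply, if_pos rfl] at this
      exact (xv_ne_zero 1) this.symm
    · intro hcon
      have h2' : 2 ≤ i := h2
      have := Dm_xv d d1 h2' (6 * i - 2)
      rw [hcon, if_neg (by omega), if_pos rfl] at this
      exact (xv_ne_zero (6 * i - 5)) (by simpa using this.symm)
  · rintro ⟨Φ, hΦ0, -, heq⟩
    have h6 : d (xv k 6) = 0 := by rw [hd]; norm_num
    set v : ℕ → (ℕ →₀ k) := fun n => if n = 0 then xv k 6 else 0 with hv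
    have hsum := congrFun (LinearMap.congr_fun heq v) 1
    rw [Module.End.mul_apply, Module.End.mul_apply] at hsum
    have e0 : (ext Φ) v 0 = xv k 6 := by
      rw [ext_apply, Finset.sum_range_one, hΦ0]
      simp [hv]
    have e1 : (ext Φ) v 1 = Φ 1 (xv k 6) := by
      rw [ext_apply, Finset.sum_range_succ, Finset.sum_range_one, hΦ0]
      norm_num [hv]
    have w0 : (ext (trivDef d)) v 0 = 0 := by
      rw [ext_apply, Finset.sum_range_one]
      simp [trivDef, hv, h6]
    have w1 : (ext (trivDef d)) v 1 = 0 := by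
      rw [ext_apply, Finset.sum_range_succ, Finset.sum_range_one]
      norm_num [trivDef, hv]
    have hL : (ext (Dfam d d1)) ((ext Φ) v) 1 = d (Φ 1 (xv k 6)) + d1 (xv k 6) := by
      rw [ext_apply, Finset.sum_range_succ, Finset.sum_range_one]
      norm_num [e0, e1, Dfam_zero, Dfam_one]
    have hR : (ext Φ) ((ext (trivDef d)) v) 1 = 0 := by
      rw [ext_apply, Finset.sum_range_succ, Finset.sum_range_one]
      norm_num [w0, w1]
    rw [hL, hR] at hsum
    have hd16 : d1 (xv k 6) = xv k 4 := by
      rw [hd1, if_neg (by omega), if_pos (by omega)]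
    rw [hd16] at hsum
    have hcoeff := congrArg (fun z : ℕ →₀ k => z 4) hsum
    simp only [Finsupp.add_apply, Finsupp.coe_zero, Pi.zero_apply, coord4 d hd] at hcoeff
    rw [xv, Finsupp.single_eq_same] at hcoeff
    simp at hcoeff
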